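/- Suppose Σ is a finite set of 3DM gadget assignments: for each hyperedge t ∈ T a Boolean value v(t), and for each element x ∈ A ∪ B ∪ C a designated incident hyperedge t(x) with x ∈ t(x). If the consistency condition holds — v(t) = true iff for every element x of t, t(x) = t, and for each element x, v(t(x)) = true — then M = {t ∈ T : v(t) = true} is a perfect matching of the 3DM instance. -/
import Mathlib


/-- A perfect matching of a 3DM instance `(A, B, C, T)`. -/
def IsPerfectMatching3DM {α β γ : Type*} (A : Finset α) (_B : Finset β) (_C : Finset γ)
    (T M : Finset (α × β × γ)) : Prop :=
  M ⊆ T ∧ M.card = A.card ∧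
    ∀ t ∈ M, ∀ t' ∈ M, t ≠ t' →
      t.1 ≠ t'.1 ∧ t.2.1 ≠ t'.2.1 ∧ t.2.2 ≠ t'.2.2

/-- Given a 3DM instance, Boolean values `v` on hyperedges (splitting
gadgets) and designated incident hyperedges `ta, tb, tc` for the elements (element
gadgets) satisfying the consistency condition — `v t = true` iff each element of `t`
designates `t`, and each element designates a TRUE hyperedge containing it — the set
`M = {t ∈ T : v t = true}` is a perfect matching. -/
theorem stmt14 {α β γ : Type*} [DecidableEq α] [DecidableEq β] [DecidableEq γ]
    (A : Finset α) (B : Finset β) (C : Finset γ) (T : Finset (α × β × γ)) (r : ℕ)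
    (hA : A.card = r) (hB : B.card = r) (hC : C.card = r)
    (hT : T ⊆ A ×ˢ B ×ˢ C)
    (v : α × β × γ → Bool)
    (ta : α → α × β × γ) (tb : β → α × β × γ) (tc : γ → α × β × γ)
    (hta : ∀ a ∈ A, ta a ∈ T ∧ (ta a).1 = a ∧ v (ta a) = true)
    (htb : ∀ b ∈ B, tb b ∈ T ∧ (tb b).2.1 = b ∧ v (tb b) = true)
    (htc : ∀ c ∈ C, tc c ∈ T ∧ (tc c).2.2 = c ∧ v (tc c) = true)
    (hcons : ∀ t ∈ T, (v t = true ↔ (ta t.1 = t ∧ tb t.2.1 = t ∧ tc t.2.2 = t))) :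
    IsPerfectMatching3DM A B C T (T.filter (fun t => v t = true)) := by
  classical
  set M := T.filter (fun t => v t = true) with hM
  have hMT : M ⊆ T := Finset.filter_subset _ _
  have hmem : ∀ t, t ∈ M ↔ t ∈ T ∧ v t = true := by
    intro t; simp [hM]
  have hdistinct : ∀ t ∈ M, ∀ t' ∈ M, t ≠ t' →
      t.1 ≠ t'.1 ∧ t.2.1 ≠ t'.2.1 ∧ t.2.2 ≠ t'.2.2 := by
    intro t ht t' ht' hne
    obtain ⟨htT, htv⟩ := (hmem t).1 ht
    obtain ⟨ht'T, ht'v⟩ := (hmem t').1 ht'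
    obtain ⟨h1, h2, h3⟩ := (hcons t htT).1 htv
    obtain ⟨h1', h2', h3'⟩ := (hcons t' ht'T).1 ht'v
    refine ⟨?_, ?_, ?_⟩
    · intro h; exact hne (by rw [← h1, ← h1', h])
    · intro h; exact hne (by rw [← h2, ← h2', h])
    · intro h; exact hne (by rw [← h3, ← h3', h])
  refine ⟨hMT, ?_, hdistinct⟩
  have hcard : M.card = A.card := by
    apply Finset.card_bij (fun t _ => t.1)
    · intro t ht
      have := hT (hMT ht)
      exact (Finset.mem_product.1 this).1
    · intro t ht t' ht' h
      by_contra hne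
      exact (hdistinct t ht t' ht' hne).1 h
    · intro a ha
      obtain ⟨h1, h2, h3⟩ := hta a ha
      exact ⟨ta a, (hmem _).2 ⟨h1, h3⟩, h2⟩
  exact hcard
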